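/- Let S_N = { Σ_{i=1}^{n} Π_{j=1}^{N} T_{i,j} : T_{i,j} ∈ To_d(1), n ∈ N } be the set of sums of products of N tridiagonal Toeplitz matrices. If n + m ≤ d - 1, then E_{n,m} ∈ S_{d-1}. -/

import Mathlib

/-- `E_{n,m}` (1-based positions): 1 in position `(n, m)`, zeros elsewhere. -/
def matUnit (d : ℕ) (n m : ℤ) : Matrix (Fin d) (Fin d) ℝ :=
  Matrix.of fun i j => if (i : ℤ) + 1 = n ∧ (j : ℤ) + 1 = m then 1 else 0

/-- `To_d(1)`: tridiagonal Toeplitz matrices, `x_{ij} = w_{j-i}` for `|i-j| ≤ 1`, else `0`. -/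
def Tod1 (d : ℕ) : Set (Matrix (Fin d) (Fin d) ℝ) :=
  {A | ∃ w : ℤ → ℝ, ∀ i j : Fin d,
    A i j = if |(i : ℤ) - (j : ℤ)| ≤ 1 then w ((j : ℤ) - (i : ℤ)) else 0}

/-- `S_N`: finite sums of (ordered) products of `N` tridiagonal Toeplitz matrices. -/
def SN (d N : ℕ) : Set (Matrix (Fin d) (Fin d) ℝ) :=
  {A | ∃ n : ℕ, ∃ T : Fin n → Fin N → Matrix (Fin d) (Fin d) ℝ,
    (∀ i j, T i j ∈ Tod1 d) ∧ A = ∑ i, (List.ofFn (T i)).prod}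

/-!
Let `L` be the lower shift matrix (ones on the subdiagonal). With 0-based indices, `L^a (Lᵀ)^b`
has a one at `(i, j)` exactly when `i ≥ a` and `i - a = j - b`, so the difference
`L^(n-1) (Lᵀ)^(m-1) - L^n (Lᵀ)^m` is the matrix unit `E_{n,m}`. Both `L` and `Lᵀ` are
tridiagonal Toeplitz, a product of fewer than `N` such matrices lies in `S_N` after padding
with identities, and `S_N` is closed under addition and, for `N ≥ 1`, under negation
(negate one factor of each product).
-/

open Matrix

section Tod1

variable {d : ℕ}

lemma one_mem_Tod1 : (1 : Matrix (Fin d) (Fin d) ℝ) ∈ Tod1 d := by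
  refine ⟨fun z => if z = 0 then 1 else 0, fun i j => ?_⟩
  simp only [one_apply, abs_le, Fin.ext_iff]
  split_ifs <;> first | rfl | omega

lemma neg_mem_Tod1 {A : Matrix (Fin d) (Fin d) ℝ} (hA : A ∈ Tod1 d) : -A ∈ Tod1 d := by
  obtain ⟨w, hw⟩ := hA
  refine ⟨-w, fun i j => ?_⟩
  rw [neg_apply, hw]
  split_ifs <;> simp

lemma transpose_mem_Tod1 {A : Matrix (Fin d) (Fin d) ℝ} (hA : A ∈ Tod1 d) : Aᵀ ∈ Tod1 d := by
  obtain ⟨w, hw⟩ := hA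
  refine ⟨fun z => w (-z), fun i j => ?_⟩
  simp only [transpose_apply, hw, abs_sub_comm, neg_sub]

end Tod1

section SN

variable {d N : ℕ}

lemma add_mem_SN {A B : Matrix (Fin d) (Fin d) ℝ} (hA : A ∈ SN d N) (hB : B ∈ SN d N) :
    A + B ∈ SN d N := by
  obtain ⟨n, S, hS, rfl⟩ := hA
  obtain ⟨n', T, hT, rfl⟩ := hB
  refine ⟨n + n', Fin.append S T,
    fun i => Fin.addCases (by simpa using hS ·) (by simpa using hT ·) i, ?_⟩
  simp [Fin.sum_univ_add]

lemma neg_mem_SN (hN : 0 < N) {A : Matrix (Fin d) (Fin d) ℝ} (hA : A ∈ SN d N) :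
    -A ∈ SN d N := by
  obtain ⟨N, rfl⟩ := Nat.exists_eq_add_one_of_ne_zero hN.ne'
  obtain ⟨n, T, hT, rfl⟩ := hA
  refine ⟨n, fun i => Fin.cons (-T i 0) (Fin.tail (T i)), fun i j => ?_, ?_⟩
  · exact Fin.cases (neg_mem_Tod1 (hT i 0)) (fun j => hT i j.succ) j
  · simp [List.ofFn_succ, Fin.tail, ← Finset.sum_neg_distrib]

lemma sub_mem_SN (hN : 0 < N) {A B : Matrix (Fin d) (Fin d) ℝ} (hA : A ∈ SN d N)
    (hB : B ∈ SN d N) : A - B ∈ SN d N := by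
  simpa only [sub_eq_add_neg] using add_mem_SN hA (neg_mem_SN hN hB)

lemma list_prod_mem_SN {l : List (Matrix (Fin d) (Fin d) ℝ)} (hl : l.length = N)
    (h : ∀ A ∈ l, A ∈ Tod1 d) : l.prod ∈ SN d N := by
  subst hl
  refine ⟨1, fun _ => l.get, fun _ j => h _ (List.get_mem l j), ?_⟩
  simp [List.ofFn_get]

lemma list_prod_mem_SN_of_length_le {l : List (Matrix (Fin d) (Fin d) ℝ)} (hl : l.length ≤ N)
    (h : ∀ A ∈ l, A ∈ Tod1 d) : l.prod ∈ SN d N := by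
  have hpad : (l ++ List.replicate (N - l.length) 1).prod = l.prod := by simp
  rw [← hpad]
  refine list_prod_mem_SN (by simp; omega) fun A hA => ?_
  rcases List.mem_append.1 hA with hA | hA
  · exact h A hA
  · rw [List.eq_of_mem_replicate hA]
    exact one_mem_Tod1

lemma pow_mul_pow_mem_SN {A B : Matrix (Fin d) (Fin d) ℝ} (hA : A ∈ Tod1 d) (hB : B ∈ Tod1 d)
    {a b : ℕ} (hab : a + b ≤ N) : A ^ a * B ^ b ∈ SN d N := by
  have hprod : (List.replicate a A ++ List.replicate b B).prod = A ^ a * B ^ b := by simp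
  rw [← hprod]
  refine list_prod_mem_SN_of_length_le (by simpa using hab) fun C hC => ?_
  rcases List.mem_append.1 hC with hC | hC
  · rwa [List.eq_of_mem_replicate hC]
  · rwa [List.eq_of_mem_replicate hC]

end SN

section lowerShift

variable {d : ℕ}

lemma sum_fin_ite_val_eq {M : Type*} [AddCommMonoid M] (c : ℕ) (x : M) :
    (∑ k : Fin d, if (k : ℕ) = c then x else 0) = if c < d then x else 0 := by
  simpa using Fin.sum_univ_eq_sum_range (fun k => if k = c then x else 0) d

def lowerShift (d : ℕ) : Matrix (Fin d) (Fin d) ℝ :=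
  of fun i j => if (i : ℕ) = j + 1 then 1 else 0

lemma lowerShift_mem_Tod1 : lowerShift d ∈ Tod1 d := by
  refine ⟨fun z => if z = -1 then 1 else 0, fun i j => ?_⟩
  simp only [lowerShift, of_apply, abs_le]
  split_ifs <;> first | rfl | omega

lemma lowerShift_pow_apply (a : ℕ) (i j : Fin d) :
    (lowerShift d ^ a) i j = if (i : ℕ) = j + a then 1 else 0 := by
  induction a generalizing i with
  | zero => simp [one_apply, Fin.ext_iff]
  | succ a ih =>
    have hterm : ∀ k : Fin d, lowerShift d i k * (lowerShift d ^ a) k j =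
        if (k : ℕ) = i - 1 then (if (i : ℕ) = j + (a + 1) then 1 else 0) else 0 := by
      intro k
      rw [ih]
      simp only [lowerShift, of_apply]
      split_ifs <;> first | omega | simp
    rw [pow_succ', mul_apply, Finset.sum_congr rfl fun k _ => hterm k, sum_fin_ite_val_eq]
    split_ifs <;> first | rfl | omega

lemma lowerShift_pow_mul_transpose_pow_apply (a b : ℕ) (i j : Fin d) :
    (lowerShift d ^ a * (lowerShift d)ᵀ ^ b) i j =
      if a ≤ (i : ℕ) ∧ (i : ℕ) + b = j + a then 1 else 0 := by
  have hterm : ∀ k : Fin d, (lowerShift d ^ a) i k * ((lowerShift d)ᵀ ^ b) k j =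
      if (k : ℕ) = i - a then (if a ≤ (i : ℕ) ∧ (i : ℕ) + b = j + a then 1 else 0) else 0 := by
    intro k
    simp only [← transpose_pow, transpose_apply, lowerShift_pow_apply]
    split_ifs <;> first | omega | simp
  rw [mul_apply, Finset.sum_congr rfl fun k _ => hterm k, sum_fin_ite_val_eq]
  split_ifs <;> first | rfl | omega

lemma matUnit_eq_sub {n m : ℕ} (hn : 1 ≤ n) (hm : 1 ≤ m) :
    matUnit d n m = lowerShift d ^ (n - 1) * (lowerShift d)ᵀ ^ (m - 1)
      - lowerShift d ^ n * (lowerShift d)ᵀ ^ m := by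
  ext i j
  simp only [matUnit, of_apply, Matrix.sub_apply, lowerShift_pow_mul_transpose_pow_apply]
  split_ifs <;> first | omega | norm_num

end lowerShift

theorem matUnit_mem_SN_of_add_le (d n m : ℕ) (hn : 1 ≤ n) (hm : 1 ≤ m)
    (hnm : n + m ≤ d - 1) : matUnit d n m ∈ SN d (d - 1) := by
  have hL := lowerShift_mem_Tod1 (d := d)
  rw [matUnit_eq_sub hn hm]
  exact sub_mem_SN (by omega) (pow_mul_pow_mem_SN hL (transpose_mem_Tod1 hL) (by omega))
    (pow_mul_pow_mem_SN hL (transpose_mem_Tod1 hL) hnm)
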